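/- Let H be a commutative Hopf G-coalgebra, A a right H-comodule Poisson algebra, and N = {N_α} a Poisson A-module. Then N ⊗ H, with (N ⊗ H)_α = ∏_{μν=α} N_μ ⊗ H_ν, is a Poisson (A,H)-Hopf module with coaction (n ⊗ h)_{(0,μ')} ⊗ (n ⊗ h)_{(1,ν')} = n ⊗ h_{(1,μ⁻¹μ')} ⊗ h_{(2,ν')}, Lie action a ⋄ (n ⊗ h) = a_{(0,μ)} ⋄ n ⊗ a_{(1,ν)}h, and module action a · (n ⊗ h) = a_{(0,μ)} · n ⊗ a_{(1,ν)}h. -/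
import Mathlib


open TensorProduct

noncomputable section

/-- Transport along an equality of indices for a family of modules. -/
def famCast {k : Type*} [CommSemiring k] {G : Type*} {H : G → Type*}
    [∀ α, AddCommMonoid (H α)] [∀ α, Module k (H α)] {x y : G} (h : x = y) :
    H x →ₗ[k] H y := by subst h; exact LinearMap.id

/-- A Hopf `G`-coalgebra over `k`. -/
structure HopfGCoalgebra (k G : Type*) [Field k] [CommGroup G] where
  H : G → Type*
  [ring : ∀ α, Ring (H α)]
  [alg : ∀ α, Algebra k (H α)]
  Δ : ∀ α β : G, H (α * β) →ₐ[k] H α ⊗[k] H β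
  ε : H 1 →ₐ[k] k
  coassoc : ∀ α β γ : G,
    (TensorProduct.assoc k (H α) (H β) (H γ)).toLinearMap ∘ₗ
      TensorProduct.map (Δ α β).toLinearMap LinearMap.id ∘ₗ (Δ (α * β) γ).toLinearMap
    = TensorProduct.map LinearMap.id (Δ β γ).toLinearMap ∘ₗ (Δ α (β * γ)).toLinearMap ∘ₗ
        famCast (k := k) (mul_assoc α β γ)
  counit_left : ∀ α : G,
    (TensorProduct.lid k (H α)).toLinearMap ∘ₗ
      TensorProduct.map ε.toLinearMap LinearMap.id ∘ₗ (Δ 1 α).toLinearMap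
    = famCast (k := k) (one_mul α)
  counit_right : ∀ α : G,
    (TensorProduct.rid k (H α)).toLinearMap ∘ₗ
      TensorProduct.map LinearMap.id ε.toLinearMap ∘ₗ (Δ α 1).toLinearMap
    = famCast (k := k) (mul_one α)
  S : ∀ α : G, H α →ₗ[k] H α⁻¹
  antipode_left : ∀ α : G,
    LinearMap.mul' k (H α) ∘ₗ
      TensorProduct.map (famCast (k := k) (inv_inv α) ∘ₗ S α⁻¹) LinearMap.id ∘ₗ
      (Δ α⁻¹ α).toLinearMap ∘ₗ famCast (k := k) (inv_mul_cancel α).symm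
    = Algebra.linearMap k (H α) ∘ₗ ε.toLinearMap
  antipode_right : ∀ α : G,
    LinearMap.mul' k (H α⁻¹) ∘ₗ
      TensorProduct.map LinearMap.id (S α) ∘ₗ
      (Δ α⁻¹ α).toLinearMap ∘ₗ famCast (k := k) (inv_mul_cancel α).symm
    = Algebra.linearMap k (H α⁻¹) ∘ₗ ε.toLinearMap

attribute [instance] HopfGCoalgebra.ring HopfGCoalgebra.alg
variable {k G : Type*} [Field k] [CommGroup G]

/-- A family of Poisson algebras which is a right `H`-comodule Poisson algebra. -/
structure GComodulePoissonAlgebra (Hc : HopfGCoalgebra k G) where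
  A : G → Type*
  [cring : ∀ α, CommRing (A α)]
  [alg : ∀ α, Algebra k (A α)]
  pb : ∀ α : G, A α →ₗ[k] A α →ₗ[k] A α
  pb_skew : ∀ (α : G) (a b : A α), pb α a b = - pb α b a
  pb_jacobi : ∀ (α : G) (a b c : A α),
    pb α a (pb α b c) = pb α (pb α a b) c + pb α b (pb α a c)
  pb_leibniz : ∀ (α : G) (a b c : A α), pb α a (b * c) = pb α a b * c + b * pb α a c
  ρ : ∀ α β : G, A (α * β) →ₐ[k] A α ⊗[k] Hc.H β
  coassoc : ∀ α β γ : G,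
    (TensorProduct.assoc k (A α) (Hc.H β) (Hc.H γ)).toLinearMap ∘ₗ
      TensorProduct.map (ρ α β).toLinearMap LinearMap.id ∘ₗ (ρ (α * β) γ).toLinearMap
    = TensorProduct.map LinearMap.id (Hc.Δ β γ).toLinearMap ∘ₗ (ρ α (β * γ)).toLinearMap ∘ₗ
        famCast (k := k) (mul_assoc α β γ)
  counit : ∀ α : G,
    (TensorProduct.rid k (A α)).toLinearMap ∘ₗ
      TensorProduct.map LinearMap.id Hc.ε.toLinearMap ∘ₗ (ρ α 1).toLinearMap
    = famCast (k := k) (mul_one α)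
  pb_comp : ∀ α β : G,
    (ρ α β).toLinearMap ∘ₗ TensorProduct.lift (pb (α * β))
    = TensorProduct.map (TensorProduct.lift (pb α)) (LinearMap.mul' k (Hc.H β)) ∘ₗ
        (TensorProduct.tensorTensorTensorComm k (A α) (Hc.H β) (A α) (Hc.H β)).toLinearMap ∘ₗ
        TensorProduct.map (ρ α β).toLinearMap (ρ α β).toLinearMap

attribute [instance] GComodulePoissonAlgebra.cring GComodulePoissonAlgebra.alg

/-- A Poisson `(A,H)`-Hopf module. -/
structure PoissonHopfModule {Hc : HopfGCoalgebra k G}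
    (Ac : GComodulePoissonAlgebra Hc) where
  M : G → Type*
  [acg : ∀ α, AddCommGroup (M α)]
  [mod : ∀ α, Module k (M α)]
  smul : ∀ α : G, Ac.A α →ₗ[k] M α →ₗ[k] M α
  one_smul : ∀ (α : G) (m : M α), smul α 1 m = m
  mul_smul : ∀ (α : G) (a b : Ac.A α) (m : M α), smul α (a * b) m = smul α a (smul α b m)
  dia : ∀ α : G, Ac.A α →ₗ[k] M α →ₗ[k] M α
  dia_lie : ∀ (α : G) (a b : Ac.A α) (m : M α),
    dia α (Ac.pb α a b) m = dia α a (dia α b m) - dia α b (dia α a m)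
  poisson1 : ∀ (α : G) (a b : Ac.A α) (m : M α),
    dia α a (smul α b m) = smul α (Ac.pb α a b) m + smul α b (dia α a m)
  poisson2 : ∀ (α : G) (a b : Ac.A α) (m : M α),
    dia α (a * b) m = smul α a (dia α b m) + smul α b (dia α a m)
  ρ : ∀ α β : G, M (α * β) →ₗ[k] M α ⊗[k] Hc.H β
  coassoc : ∀ α β γ : G,
    (TensorProduct.assoc k (M α) (Hc.H β) (Hc.H γ)).toLinearMap ∘ₗ
      TensorProduct.map (ρ α β) LinearMap.id ∘ₗ ρ (α * β) γ
    = TensorProduct.map LinearMap.id (Hc.Δ β γ).toLinearMap ∘ₗ ρ α (β * γ) ∘ₗ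
        famCast (k := k) (mul_assoc α β γ)
  counit : ∀ α : G,
    (TensorProduct.rid k (M α)).toLinearMap ∘ₗ
      TensorProduct.map LinearMap.id Hc.ε.toLinearMap ∘ₗ ρ α 1
    = famCast (k := k) (mul_one α)
  smul_comp : ∀ α β : G,
    ρ α β ∘ₗ TensorProduct.lift (smul (α * β))
    = TensorProduct.map (TensorProduct.lift (smul α)) (LinearMap.mul' k (Hc.H β)) ∘ₗ
        (TensorProduct.tensorTensorTensorComm k (Ac.A α) (Hc.H β) (M α) (Hc.H β)).toLinearMap ∘ₗ
        TensorProduct.map (Ac.ρ α β).toLinearMap (ρ α β)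
  dia_comp : ∀ α β : G,
    ρ α β ∘ₗ TensorProduct.lift (dia (α * β))
    = TensorProduct.map (TensorProduct.lift (dia α)) (LinearMap.mul' k (Hc.H β)) ∘ₗ
        (TensorProduct.tensorTensorTensorComm k (Ac.A α) (Hc.H β) (M α) (Hc.H β)).toLinearMap ∘ₗ
        TensorProduct.map (Ac.ρ α β).toLinearMap (ρ α β)

attribute [instance] PoissonHopfModule.acg PoissonHopfModule.mod

variable {Hc : HopfGCoalgebra k G} {Ac : GComodulePoissonAlgebra Hc}

/-- A coinvariant family for a Poisson Hopf module. -/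
def PoissonHopfModule.IsCoinv (Mc : PoissonHopfModule Ac) (m : ∀ γ : G, Mc.M γ) : Prop :=
  ∀ γ β : G, Mc.ρ γ β (m (γ * β)) = m γ ⊗ₜ[k] (1 : Hc.H β)

/-- A coinvariant family for the comodule algebra `A`. -/
def GComodulePoissonAlgebra.IsCoinv (Ac : GComodulePoissonAlgebra Hc)
    (a : ∀ γ : G, Ac.A γ) : Prop :=
  ∀ γ β : G, Ac.ρ γ β (a (γ * β)) = a γ ⊗ₜ[k] (1 : Hc.H β)

/-- `M^{A_α}_α`, the space of elements killed by the Lie action. -/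
def PoissonHopfModule.diaInv (Mc : PoissonHopfModule Ac) (α : G) :
    Submodule k (Mc.M α) where
  carrier := {m | ∀ a : Ac.A α, Mc.dia α a m = 0}
  zero_mem' := fun a => map_zero _
  add_mem' := fun {x y} hx hy a => by rw [map_add, hx a, hy a, add_zero]
  smul_mem' := fun c x hx a => by rw [map_smul, hx a, smul_zero]

/-- The Poisson-central part `A^{A_α}_α` of `A_α`. -/
def GComodulePoissonAlgebra.center (Ac : GComodulePoissonAlgebra Hc) (α : G) :
    Submodule k (Ac.A α) where
  carrier := {a | ∀ b : Ac.A α, Ac.pb α a b = 0}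
  zero_mem' := fun b => by rw [map_zero]; rfl
  add_mem' := fun {x y} hx hy b => by rw [map_add]; simp [hx b, hy b]
  smul_mem' := fun c x hx b => by rw [map_smul]; simp [hx b]

/-- `M^{coH}_α` for a Poisson Hopf module. -/
def PoissonHopfModule.coinv (Mc : PoissonHopfModule Ac) (α : G) : Set (Mc.M α) :=
  {x | ∃ m : ∀ γ : G, Mc.M γ, Mc.IsCoinv m ∧ m α = x}

/-- `A^{coH}_α`. -/
def GComodulePoissonAlgebra.coinv (Ac : GComodulePoissonAlgebra Hc) (α : G) :
    Set (Ac.A α) :=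
  {x | ∃ a : ∀ γ : G, Ac.A γ, Ac.IsCoinv a ∧ a α = x}

/-- A Lie `A`-module. -/
structure LieAModule (Ac : GComodulePoissonAlgebra Hc) where
  N : G → Type*
  [acg : ∀ α, AddCommGroup (N α)]
  [mod : ∀ α, Module k (N α)]
  dia : ∀ α : G, Ac.A α →ₗ[k] N α →ₗ[k] N α
  dia_lie : ∀ (α : G) (a b : Ac.A α) (n : N α),
    dia α (Ac.pb α a b) n = dia α a (dia α b n) - dia α b (dia α a n)

attribute [instance] LieAModule.acg LieAModule.mod

/-- A Poisson `A`-module. -/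
structure PoissonAModule (Ac : GComodulePoissonAlgebra Hc) where
  N : G → Type*
  [acg : ∀ α, AddCommGroup (N α)]
  [mod : ∀ α, Module k (N α)]
  smul : ∀ α : G, Ac.A α →ₗ[k] N α →ₗ[k] N α
  one_smul : ∀ (α : G) (n : N α), smul α 1 n = n
  mul_smul : ∀ (α : G) (a b : Ac.A α) (n : N α), smul α (a * b) n = smul α a (smul α b n)
  dia : ∀ α : G, Ac.A α →ₗ[k] N α →ₗ[k] N α
  dia_lie : ∀ (α : G) (a b : Ac.A α) (n : N α),
    dia α (Ac.pb α a b) n = dia α a (dia α b n) - dia α b (dia α a n)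
  poisson1 : ∀ (α : G) (a b : Ac.A α) (n : N α),
    dia α a (smul α b n) = smul α (Ac.pb α a b) n + smul α b (dia α a n)
  poisson2 : ∀ (α : G) (a b : Ac.A α) (n : N α),
    dia α (a * b) n = smul α a (dia α b n) + smul α b (dia α a n)

attribute [instance] PoissonAModule.acg PoissonAModule.mod

variable (Hc) in
/-- The component `ρ_{μ',ν'}` of the coaction of `H` on `N ⊗ H`, restricted to the
component `N_μ ⊗ H_ν` (for `μν = μ'ν'`); it takes values in the component
`N_μ ⊗ H_{μ⁻¹μ'}` tensored with `H_{ν'}`. -/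
def tensorCoact {N : G → Type*} [∀ α, AddCommGroup (N α)] [∀ α, Module k (N α)]
    (μ ν μ' ν' : G) (h : μ * ν = μ' * ν') :
    (N μ ⊗[k] Hc.H ν) →ₗ[k] (N μ ⊗[k] Hc.H (μ⁻¹ * μ')) ⊗[k] Hc.H ν' :=
  (TensorProduct.assoc k (N μ) (Hc.H (μ⁻¹ * μ')) (Hc.H ν')).symm.toLinearMap ∘ₗ
    TensorProduct.map LinearMap.id
      ((Hc.Δ (μ⁻¹ * μ') ν').toLinearMap ∘ₗ
        famCast (k := k) (show ν = (μ⁻¹ * μ') * ν' by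
          rw [mul_assoc]; exact eq_inv_mul_iff_mul_eq.mpr h))

variable (Ac) in
/-- The Lie action of `A_{μν}` on the component `N_μ ⊗ H_ν` of `N ⊗ H`:
`a ⋄ (n ⊗ h) = a_{(0,μ)} ⋄ n ⊗ a_{(1,ν)} h`. -/
def compDia (N : G → Type*) [∀ α, AddCommGroup (N α)] [∀ α, Module k (N α)]
    (dia : ∀ α : G, Ac.A α →ₗ[k] N α →ₗ[k] N α) (μ ν : G) :
    Ac.A (μ * ν) →ₗ[k] (N μ ⊗[k] Hc.H ν) →ₗ[k] (N μ ⊗[k] Hc.H ν) :=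
  TensorProduct.curry
    (TensorProduct.map (TensorProduct.lift (dia μ)) (LinearMap.mul' k (Hc.H ν)) ∘ₗ
      (TensorProduct.tensorTensorTensorComm k (Ac.A μ) (Hc.H ν) (N μ) (Hc.H ν)).toLinearMap ∘ₗ
      TensorProduct.map (Ac.ρ μ ν).toLinearMap LinearMap.id)

section TensorProps

variable {N : G → Type*} [∀ α, AddCommGroup (N α)] [∀ α, Module k (N α)]

variable (Ac) in
/-- The comodule coassociativity axiom for `N ⊗ H`, componentwise. -/
def TensorCoassoc (N : G → Type*) [∀ α, AddCommGroup (N α)] [∀ α, Module k (N α)] : Prop :=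
  ∀ (μ ν α β γ : G) (h : μ * ν = α * β * γ),
    (TensorProduct.assoc k (N μ ⊗[k] Hc.H (μ⁻¹ * α)) (Hc.H β) (Hc.H γ)).toLinearMap ∘ₗ
      TensorProduct.map
        (tensorCoact Hc (N := N) μ (μ⁻¹ * (α * β)) α β (mul_inv_cancel_left μ (α * β)))
        (LinearMap.id : Hc.H γ →ₗ[k] Hc.H γ) ∘ₗ
      tensorCoact Hc (N := N) μ ν (α * β) γ h
    = TensorProduct.map LinearMap.id (Hc.Δ β γ).toLinearMap ∘ₗ
        tensorCoact Hc (N := N) μ ν α (β * γ) (by rw [← mul_assoc]; exact h)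

variable (Ac) in
/-- The comodule counit axiom for `N ⊗ H`, componentwise. -/
def TensorCounit (N : G → Type*) [∀ α, AddCommGroup (N α)] [∀ α, Module k (N α)] : Prop :=
  ∀ μ ν : G,
    (TensorProduct.rid k (N μ ⊗[k] Hc.H (μ⁻¹ * (μ * ν)))).toLinearMap ∘ₗ
      TensorProduct.map LinearMap.id Hc.ε.toLinearMap ∘ₗ
      tensorCoact Hc (N := N) μ ν (μ * ν) 1 (mul_one (μ * ν)).symm
    = TensorProduct.map LinearMap.id
        (famCast (k := k) (inv_mul_cancel_left μ ν).symm)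

variable (Ac) in
/-- The compatibility (2.4) between the Lie action and the coaction on `N ⊗ H`,
componentwise. -/
def TensorDiaCompat (N : G → Type*) [∀ α, AddCommGroup (N α)] [∀ α, Module k (N α)]
    (dia : ∀ α : G, Ac.A α →ₗ[k] N α →ₗ[k] N α) : Prop :=
  ∀ (μ ν μ' ν' : G) (h : μ * ν = μ' * ν'),
    tensorCoact Hc (N := N) μ ν μ' ν' h ∘ₗ
        TensorProduct.lift (compDia Ac N dia μ ν)
    = TensorProduct.map
        (TensorProduct.lift (compDia Ac N dia μ (μ⁻¹ * μ') ∘ₗ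
          famCast (k := k) (mul_inv_cancel_left μ μ').symm))
        (LinearMap.mul' k (Hc.H ν')) ∘ₗ
      (TensorProduct.tensorTensorTensorComm k (Ac.A μ') (Hc.H ν')
        (N μ ⊗[k] Hc.H (μ⁻¹ * μ')) (Hc.H ν')).toLinearMap ∘ₗ
      TensorProduct.map ((Ac.ρ μ' ν').toLinearMap ∘ₗ famCast (k := k) h)
        (tensorCoact Hc (N := N) μ ν μ' ν' h)

end TensorProps

set_option linter.unusedSectionVars false
set_option synthInstance.maxHeartbeats 1000000
set_option maxHeartbeats 1000000

section Aux
variable {N : G → Type*} [∀ α, AddCommGroup (N α)] [∀ α, Module k (N α)]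

@[simp] lemma famCast_self {H : G → Type*} [∀ α, AddCommMonoid (H α)] [∀ α, Module k (H α)]
    {x : G} (h : x = x) : famCast (k := k) (H := H) h = LinearMap.id := rfl

lemma famCast_mul {x y : G} (h : x = y) (a b : Hc.H x) :
    famCast (k := k) h (a * b) = famCast (k := k) h a * famCast (k := k) h b := by
  subst h; rfl

lemma famCast_famCast {H : G → Type*} [∀ α, AddCommMonoid (H α)] [∀ α, Module k (H α)]
    {x y z : G} (h1 : x = y) (h2 : y = z) (v : H x) :
    famCast (k := k) (H := H) h2 (famCast (k := k) (H := H) h1 v)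
      = famCast (k := k) (H := H) (h1.trans h2) v := by
  subst h1; subst h2; rfl

/-- `psi dia μ ν t m` is `Σ dia a₀ n ⊗ a₁ h` for `t = Σ a₀ ⊗ a₁`, `m = n ⊗ h`. -/
def psi (dia : ∀ α : G, Ac.A α →ₗ[k] N α →ₗ[k] N α) (μ ν : G) :
    (Ac.A μ ⊗[k] Hc.H ν) →ₗ[k] (N μ ⊗[k] Hc.H ν) →ₗ[k] N μ ⊗[k] Hc.H ν :=
  TensorProduct.curry
    (TensorProduct.map (TensorProduct.lift (dia μ)) (LinearMap.mul' k (Hc.H ν)) ∘ₗ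
      (TensorProduct.tensorTensorTensorComm k (Ac.A μ) (Hc.H ν) (N μ) (Hc.H ν)).toLinearMap)

lemma compDia_apply (dia : ∀ α : G, Ac.A α →ₗ[k] N α →ₗ[k] N α) (μ ν : G)
    (a : Ac.A (μ * ν)) (m : N μ ⊗[k] Hc.H ν) :
    compDia Ac N dia μ ν a m = psi dia μ ν (Ac.ρ μ ν a) m := rfl

@[simp] lemma psi_tmul (dia : ∀ α : G, Ac.A α →ₗ[k] N α →ₗ[k] N α) (μ ν : G)
    (a0 : Ac.A μ) (a1 : Hc.H ν) (n : N μ) (h : Hc.H ν) :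
    psi dia μ ν (a0 ⊗ₜ[k] a1) (n ⊗ₜ[k] h) = dia μ a0 n ⊗ₜ[k] (a1 * h) := by
  simp [psi]

lemma rho_pb (μ ν : G) (a b : Ac.A (μ * ν)) :
    Ac.ρ μ ν (Ac.pb (μ * ν) a b)
      = TensorProduct.map (TensorProduct.lift (Ac.pb μ)) (LinearMap.mul' k (Hc.H ν))
          ((TensorProduct.tensorTensorTensorComm k (Ac.A μ) (Hc.H ν) (Ac.A μ) (Hc.H ν))
            (Ac.ρ μ ν a ⊗ₜ[k] Ac.ρ μ ν b)) := by
  have := LinearMap.congr_fun (Ac.pb_comp μ ν) (a ⊗ₜ[k] b)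
  simpa using this

end Aux

section Parts
variable (Nc : PoissonAModule Ac)

lemma psi_one (μ ν : G) (x : Nc.N μ ⊗[k] Hc.H ν) :
    psi Nc.smul μ ν (1 : Ac.A μ ⊗[k] Hc.H ν) x = x := by
  rw [Algebra.TensorProduct.one_def]
  induction x using TensorProduct.induction_on with
  | zero => simp
  | tmul n h => simp [Nc.one_smul]
  | add a b ha hb => simp [ha, hb]

lemma psi_mul (μ ν : G) (t s : Ac.A μ ⊗[k] Hc.H ν) (x : Nc.N μ ⊗[k] Hc.H ν) :
    psi Nc.smul μ ν (t * s) x = psi Nc.smul μ ν t (psi Nc.smul μ ν s x) := by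
  induction t using TensorProduct.induction_on with
  | zero => simp
  | add t1 t2 h1 h2 => simp [add_mul, h1, h2]
  | tmul a0 a1 =>
    induction s using TensorProduct.induction_on with
    | zero => simp
    | add s1 s2 h1 h2 => simp [mul_add, h1, h2]
    | tmul b0 b1 =>
      induction x using TensorProduct.induction_on with
      | zero => simp
      | add x1 x2 h1 h2 =>
        simp only [Algebra.TensorProduct.tmul_mul_tmul] at h1 h2 ⊢
        simp [h1, h2]
      | tmul n h => simp [Algebra.TensorProduct.tmul_mul_tmul, Nc.mul_smul, mul_assoc]

end Parts

section Parts2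
variable (Nc : PoissonAModule Ac)

lemma psi_pb (hcomm : ∀ (α : G) (x y : Hc.H α), x * y = y * x) (μ ν : G)
    (t s : Ac.A μ ⊗[k] Hc.H ν) (x : Nc.N μ ⊗[k] Hc.H ν) :
    psi Nc.dia μ ν
      (TensorProduct.map (TensorProduct.lift (Ac.pb μ)) (LinearMap.mul' k (Hc.H ν))
        ((TensorProduct.tensorTensorTensorComm k (Ac.A μ) (Hc.H ν) (Ac.A μ) (Hc.H ν))
          (t ⊗ₜ[k] s))) x
      = psi Nc.dia μ ν t (psi Nc.dia μ ν s x) - psi Nc.dia μ ν s (psi Nc.dia μ ν t x) := by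
  have hlc : ∀ (x y z : Hc.H ν), x * (y * z) = y * (x * z) := fun x y z => by
    rw [← mul_assoc, hcomm ν x y, mul_assoc]
  induction t using TensorProduct.induction_on with
  | zero => simp
  | add t1 t2 h1 h2 =>
    simp only [add_tmul, map_add, LinearMap.add_apply]
    rw [h1, h2]; abel
  | tmul a0 a1 =>
    induction s using TensorProduct.induction_on with
    | zero => simp
    | add s1 s2 h1 h2 =>
      simp only [tmul_add, map_add, LinearMap.add_apply]
      rw [h1, h2]; abel
    | tmul b0 b1 =>
      induction x using TensorProduct.induction_on with
      | zero => simp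
      | add x1 x2 h1 h2 =>
        simp only [map_add]
        rw [h1, h2]; abel
      | tmul n h =>
        simp only [TensorProduct.tensorTensorTensorComm_tmul, TensorProduct.map_tmul,
          TensorProduct.lift.tmul, LinearMap.mul'_apply, psi_tmul]
        rw [Nc.dia_lie, TensorProduct.sub_tmul]
        simp [mul_assoc, hcomm ν, hlc]

lemma psi_poisson1 (hcomm : ∀ (α : G) (x y : Hc.H α), x * y = y * x) (μ ν : G)
    (t s : Ac.A μ ⊗[k] Hc.H ν) (x : Nc.N μ ⊗[k] Hc.H ν) :
    psi Nc.dia μ ν t (psi Nc.smul μ ν s x)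
      = psi Nc.smul μ ν
          (TensorProduct.map (TensorProduct.lift (Ac.pb μ)) (LinearMap.mul' k (Hc.H ν))
            ((TensorProduct.tensorTensorTensorComm k (Ac.A μ) (Hc.H ν) (Ac.A μ) (Hc.H ν))
              (t ⊗ₜ[k] s))) x
        + psi Nc.smul μ ν s (psi Nc.dia μ ν t x) := by
  have hlc : ∀ (x y z : Hc.H ν), x * (y * z) = y * (x * z) := fun x y z => by
    rw [← mul_assoc, hcomm ν x y, mul_assoc]
  induction t using TensorProduct.induction_on with
  | zero => simp
  | add t1 t2 h1 h2 =>
    simp only [add_tmul, map_add, LinearMap.add_apply]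
    rw [h1, h2]; abel
  | tmul a0 a1 =>
    induction s using TensorProduct.induction_on with
    | zero => simp
    | add s1 s2 h1 h2 =>
      simp only [tmul_add, map_add, LinearMap.add_apply]
      rw [h1, h2]; abel
    | tmul b0 b1 =>
      induction x using TensorProduct.induction_on with
      | zero => simp
      | add x1 x2 h1 h2 =>
        simp only [map_add]
        rw [h1, h2]; abel
      | tmul n h =>
        simp only [TensorProduct.tensorTensorTensorComm_tmul, TensorProduct.map_tmul,
          TensorProduct.lift.tmul, LinearMap.mul'_apply, psi_tmul]
        rw [Nc.poisson1, TensorProduct.add_tmul]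
        simp [mul_assoc, hcomm ν, hlc]

lemma psi_poisson2 (hcomm : ∀ (α : G) (x y : Hc.H α), x * y = y * x) (μ ν : G)
    (t s : Ac.A μ ⊗[k] Hc.H ν) (x : Nc.N μ ⊗[k] Hc.H ν) :
    psi Nc.dia μ ν (t * s) x
      = psi Nc.smul μ ν t (psi Nc.dia μ ν s x)
        + psi Nc.smul μ ν s (psi Nc.dia μ ν t x) := by
  have hlc : ∀ (x y z : Hc.H ν), x * (y * z) = y * (x * z) := fun x y z => by
    rw [← mul_assoc, hcomm ν x y, mul_assoc]
  induction t using TensorProduct.induction_on with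
  | zero => simp
  | add t1 t2 h1 h2 =>
    simp only [add_mul, map_add, LinearMap.add_apply]
    rw [h1, h2]; abel
  | tmul a0 a1 =>
    induction s using TensorProduct.induction_on with
    | zero => simp
    | add s1 s2 h1 h2 =>
      simp only [mul_add, map_add, LinearMap.add_apply]
      rw [h1, h2]; abel
    | tmul b0 b1 =>
      induction x using TensorProduct.induction_on with
      | zero => simp
      | add x1 x2 h1 h2 =>
        simp only [map_add]
        rw [h1, h2]; abel
      | tmul n h =>
        simp only [Algebra.TensorProduct.tmul_mul_tmul, psi_tmul]
        rw [Nc.poisson2, TensorProduct.add_tmul]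
        simp [mul_assoc, hcomm ν, hlc]

end Parts2

section Generic

variable {W Y Z Z' P Q : Type*}
  [AddCommMonoid W] [AddCommMonoid Y] [AddCommMonoid Z] [AddCommMonoid Z']
  [AddCommMonoid P] [AddCommMonoid Q]
  [Module k W] [Module k Y] [Module k Z] [Module k Z'] [Module k P] [Module k Q]

lemma aux6e (g : Y →ₗ[k] P ⊗[k] Q) (w : W) (t : Y ⊗[k] Z) :
    (TensorProduct.assoc k (W ⊗[k] P) Q Z)
      (TensorProduct.map
        ((TensorProduct.assoc k W P Q).symm.toLinearMap ∘ₗ TensorProduct.map LinearMap.id g)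
        LinearMap.id ((TensorProduct.assoc k W Y Z).symm (w ⊗ₜ[k] t)))
    = (TensorProduct.assoc k W P (Q ⊗[k] Z)).symm
        (w ⊗ₜ[k] (TensorProduct.assoc k P Q Z) (TensorProduct.map g LinearMap.id t)) := by
  induction t using TensorProduct.induction_on with
  | zero => simp
  | add t1 t2 h1 h2 => simp only [TensorProduct.tmul_add, map_add, h1, h2]
  | tmul y z =>
    simp only [TensorProduct.assoc_symm_tmul, TensorProduct.map_tmul, LinearMap.id_apply,
      LinearMap.comp_apply]
    generalize g y = s
    induction s using TensorProduct.induction_on with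
    | zero => simp
    | add s1 s2 h1 h2 =>
      simp only [TensorProduct.tmul_add, TensorProduct.add_tmul, map_add, h1, h2]
    | tmul p q => simp

lemma auxB (f : Z →ₗ[k] Z') (w : W) (t : P ⊗[k] Z) :
    TensorProduct.map (LinearMap.id : W ⊗[k] P →ₗ[k] W ⊗[k] P) f
        ((TensorProduct.assoc k W P Z).symm (w ⊗ₜ[k] t))
      = (TensorProduct.assoc k W P Z').symm (w ⊗ₜ[k] TensorProduct.map LinearMap.id f t) := by
  induction t using TensorProduct.induction_on with
  | zero => simp
  | add t1 t2 h1 h2 => simp only [TensorProduct.tmul_add, map_add, h1, h2]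
  | tmul p z => simp

lemma auxC (e : Z →ₗ[k] k) (w : W) (t : Y ⊗[k] Z) :
    (TensorProduct.rid k (W ⊗[k] Y))
      (TensorProduct.map (LinearMap.id : W ⊗[k] Y →ₗ[k] W ⊗[k] Y) e
        ((TensorProduct.assoc k W Y Z).symm (w ⊗ₜ[k] t)))
    = w ⊗ₜ[k] (TensorProduct.rid k Y) (TensorProduct.map LinearMap.id e t) := by
  induction t using TensorProduct.induction_on with
  | zero => simp
  | add t1 t2 h1 h2 => simp only [TensorProduct.tmul_add, map_add, h1, h2]
  | tmul y z => simp [TensorProduct.tmul_smul]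

end Generic

section CastLemmas

lemma Hcoassoc' (a β γ : G) {x y : G} (e1 : x = y * γ) (e2 : y = a * β)
    (e3 : x = a * (β * γ)) :
    (TensorProduct.assoc k (Hc.H a) (Hc.H β) (Hc.H γ)).toLinearMap ∘ₗ
      TensorProduct.map ((Hc.Δ a β).toLinearMap ∘ₗ famCast (k := k) e2) LinearMap.id ∘ₗ
      (Hc.Δ y γ).toLinearMap ∘ₗ famCast (k := k) e1
    = TensorProduct.map LinearMap.id (Hc.Δ β γ).toLinearMap ∘ₗ
        (Hc.Δ a (β * γ)).toLinearMap ∘ₗ famCast (k := k) e3 := by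
  subst e2; subst e1
  have := Hc.coassoc a β γ
  simpa using this

lemma Acoassoc' (α β γ : G) {x y : G} (e1 : x = y * γ) (e2 : y = α * β)
    (e3 : x = α * (β * γ)) :
    (TensorProduct.assoc k (Ac.A α) (Hc.H β) (Hc.H γ)).toLinearMap ∘ₗ
      TensorProduct.map ((Ac.ρ α β).toLinearMap ∘ₗ famCast (k := k) e2) LinearMap.id ∘ₗ
      (Ac.ρ y γ).toLinearMap ∘ₗ famCast (k := k) e1
    = TensorProduct.map LinearMap.id (Hc.Δ β γ).toLinearMap ∘ₗ
        (Ac.ρ α (β * γ)).toLinearMap ∘ₗ famCast (k := k) e3 := by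
  subst e2; subst e1
  have := Ac.coassoc α β γ
  simpa using this

lemma rho_cast_right {μ ν ν'' : G} (e : ν = ν'') (e' : μ * ν = μ * ν'') :
    (Ac.ρ μ ν'').toLinearMap ∘ₗ famCast (k := k) e'
      = TensorProduct.map LinearMap.id (famCast (k := k) e) ∘ₗ (Ac.ρ μ ν).toLinearMap := by
  subst e
  simp [TensorProduct.map_id]

variable {N : G → Type*} [∀ α, AddCommGroup (N α)] [∀ α, Module k (N α)]

lemma tensorCoact_tmul (μ ν μ' ν' : G) (h : μ * ν = μ' * ν') (e1 : ν = (μ⁻¹ * μ') * ν')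
    (n : N μ) (x : Hc.H ν) :
    tensorCoact Hc (N := N) μ ν μ' ν' h (n ⊗ₜ[k] x)
      = (TensorProduct.assoc k (N μ) (Hc.H (μ⁻¹ * μ')) (Hc.H ν')).symm
          (n ⊗ₜ[k] (Hc.Δ (μ⁻¹ * μ') ν') (famCast (k := k) e1 x)) := rfl

end CastLemmas

section BigLemmas
variable {N : G → Type*} [∀ α, AddCommGroup (N α)] [∀ α, Module k (N α)]

lemma tensorCoassoc_of : TensorCoassoc (Hc := Hc) N := by
  intro μ ν α β γ hh
  have e1 : ν = (μ⁻¹ * (α * β)) * γ := by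
    rw [mul_assoc]; exact eq_inv_mul_iff_mul_eq.mpr hh
  have e2 : μ⁻¹ * (α * β) = (μ⁻¹ * α) * β := (mul_assoc μ⁻¹ α β).symm
  have e3 : ν = (μ⁻¹ * α) * (β * γ) := by
    rw [e1, e2, mul_assoc]
  refine TensorProduct.ext' fun n x => ?_
  simp only [LinearMap.comp_apply, LinearEquiv.coe_coe]
  rw [tensorCoact_tmul μ ν (α * β) γ hh e1]
  have hT : tensorCoact Hc (N := N) μ (μ⁻¹ * (α * β)) α β (mul_inv_cancel_left μ (α * β))
      = (TensorProduct.assoc k (N μ) (Hc.H (μ⁻¹ * α)) (Hc.H β)).symm.toLinearMap ∘ₗ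
          TensorProduct.map LinearMap.id
            ((Hc.Δ (μ⁻¹ * α) β).toLinearMap ∘ₗ famCast (k := k) e2) := rfl
  rw [hT, aux6e]
  have key := LinearMap.congr_fun (Hcoassoc' (μ⁻¹ * α) β γ e1 e2 e3) x
  simp only [LinearMap.comp_apply, LinearEquiv.coe_coe, AlgHom.toLinearMap_apply] at key ⊢
  rw [key]
  rw [tensorCoact_tmul μ ν α (β * γ) (by rw [← mul_assoc]; exact hh) e3]
  rw [auxB]

lemma tensorCounit_of : TensorCounit (Hc := Hc) N := by
  intro μ ν
  have e1 : ν = (μ⁻¹ * (μ * ν)) * 1 := by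
    rw [mul_one, inv_mul_cancel_left]
  refine TensorProduct.ext' fun n x => ?_
  simp only [LinearMap.comp_apply, LinearEquiv.coe_coe]
  rw [tensorCoact_tmul μ ν (μ * ν) 1 (mul_one (μ * ν)).symm e1, auxC]
  have key := LinearMap.congr_fun (Hc.counit_right (μ⁻¹ * (μ * ν))) (famCast (k := k) e1 x)
  simp only [LinearMap.comp_apply, LinearEquiv.coe_coe, AlgHom.toLinearMap_apply] at key
  rw [key, TensorProduct.map_tmul, famCast_famCast]
  rfl

end BigLemmas

section DiaCompat
variable {N : G → Type*} [∀ α, AddCommGroup (N α)] [∀ α, Module k (N α)]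

lemma dcL (dia : ∀ α : G, Ac.A α →ₗ[k] N α →ₗ[k] N α) (μ ν μ' ν' : G)
    (h : μ * ν = μ' * ν') (e1 : ν = (μ⁻¹ * μ') * ν')
    (n : N μ) (x : Hc.H ν) (t : Ac.A μ ⊗[k] Hc.H ν) :
    tensorCoact Hc (N := N) μ ν μ' ν' h (psi dia μ ν t (n ⊗ₜ[k] x))
      = ((TensorProduct.assoc k (N μ) (Hc.H (μ⁻¹ * μ')) (Hc.H ν')).symm.toLinearMap ∘ₗ
          TensorProduct.map ((dia μ).flip n)
            (LinearMap.mulRight k ((Hc.Δ (μ⁻¹ * μ') ν') (famCast (k := k) e1 x))))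
        (TensorProduct.map LinearMap.id
          ((Hc.Δ (μ⁻¹ * μ') ν').toLinearMap ∘ₗ famCast (k := k) e1) t) := by
  induction t using TensorProduct.induction_on with
  | zero => simp
  | add t1 t2 h1 h2 =>
    simp only [map_add, LinearMap.add_apply, h1, h2]
  | tmul a0 a1 =>
    rw [psi_tmul, tensorCoact_tmul μ ν μ' ν' h e1]
    simp only [LinearMap.comp_apply, TensorProduct.map_tmul, LinearMap.id_apply,
      LinearEquiv.coe_coe, AlgHom.toLinearMap_apply, LinearMap.flip_apply,
      LinearMap.mulRight_apply, famCast_mul, map_mul]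

lemma dcR (dia : ∀ α : G, Ac.A α →ₗ[k] N α →ₗ[k] N α) (μ b ν' μ' : G)
    (e2 : μ' = μ * b) (n : N μ) (u : Hc.H b ⊗[k] Hc.H ν') (s : Ac.A μ' ⊗[k] Hc.H ν') :
    TensorProduct.map
        (TensorProduct.lift (compDia Ac N dia μ b ∘ₗ famCast (k := k) e2))
        (LinearMap.mul' k (Hc.H ν'))
      ((TensorProduct.tensorTensorTensorComm k (Ac.A μ') (Hc.H ν')
          (N μ ⊗[k] Hc.H b) (Hc.H ν'))
        (s ⊗ₜ[k] (TensorProduct.assoc k (N μ) (Hc.H b) (Hc.H ν')).symm (n ⊗ₜ[k] u)))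
      = ((TensorProduct.assoc k (N μ) (Hc.H b) (Hc.H ν')).symm.toLinearMap ∘ₗ
          TensorProduct.map ((dia μ).flip n) (LinearMap.mulRight k u))
        ((TensorProduct.assoc k (Ac.A μ) (Hc.H b) (Hc.H ν'))
          (TensorProduct.map ((Ac.ρ μ b).toLinearMap ∘ₗ famCast (k := k) e2)
            LinearMap.id s)) := by
  induction s using TensorProduct.induction_on with
  | zero => simp
  | add s1 s2 h1 h2 =>
    simp only [TensorProduct.add_tmul, map_add, LinearMap.add_apply, h1, h2]
  | tmul A0 A1 =>
    have hmr0 : LinearMap.mulRight k (0 : Hc.H b ⊗[k] Hc.H ν') = 0 :=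
      LinearMap.mulRight_zero_eq_zero k _
    have hmradd : ∀ u1 u2 : Hc.H b ⊗[k] Hc.H ν',
        LinearMap.mulRight k (u1 + u2)
          = LinearMap.mulRight k u1 + LinearMap.mulRight k u2 := by
      intro u1 u2; ext z; simp [mul_add]
    induction u using TensorProduct.induction_on with
    | zero =>
      simp [hmr0, TensorProduct.map_zero_right]
    | add u1 u2 h1 h2 =>
      simp only [TensorProduct.tmul_add, map_add, TensorProduct.add_tmul, hmradd,
        TensorProduct.map_add_right, LinearMap.add_apply, LinearMap.comp_apply] at h1 h2 ⊢
      rw [h1, h2]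
    | tmul u1 u2 =>
      simp only [TensorProduct.assoc_symm_tmul, TensorProduct.tensorTensorTensorComm_tmul,
        TensorProduct.map_tmul, TensorProduct.lift.tmul, LinearMap.comp_apply,
        LinearMap.mul'_apply, LinearMap.id_apply, LinearEquiv.coe_coe,
        AlgHom.toLinearMap_apply]
      rw [compDia_apply]
      generalize (Ac.ρ μ b) ((famCast (k := k) e2) A0) = r
      induction r using TensorProduct.induction_on with
      | zero => simp
      | add r1 r2 h1 h2 =>
        simp only [map_add, LinearMap.add_apply, TensorProduct.add_tmul, h1, h2]
      | tmul b0 b1 =>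
        simp [Algebra.TensorProduct.tmul_mul_tmul]

lemma tensorDiaCompat_of (dia : ∀ α : G, Ac.A α →ₗ[k] N α →ₗ[k] N α) :
    TensorDiaCompat Ac N dia := by
  intro μ ν μ' ν' h
  have e1 : ν = (μ⁻¹ * μ') * ν' := by
    rw [mul_assoc]; exact eq_inv_mul_iff_mul_eq.mpr h
  have e2 : μ' = μ * (μ⁻¹ * μ') := (mul_inv_cancel_left μ μ').symm
  have e3 : μ * ν = μ * ((μ⁻¹ * μ') * ν') := by rw [← e1]
  refine TensorProduct.ext' fun a m => ?_
  induction m using TensorProduct.induction_on with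
  | zero => simp
  | add m1 m2 h1 h2 => simp only [TensorProduct.tmul_add, map_add, h1, h2]
  | tmul n x =>
    simp only [LinearMap.comp_apply, TensorProduct.lift.tmul, TensorProduct.map_tmul,
      LinearEquiv.coe_coe]
    rw [compDia_apply, tensorCoact_tmul μ ν μ' ν' h e1, dcL dia μ ν μ' ν' h e1,
      dcR dia μ (μ⁻¹ * μ') ν' μ' e2]
    -- it remains to identify the two arguments via coassociativity of the coaction
    have key := LinearMap.congr_fun (Acoassoc' μ (μ⁻¹ * μ') ν' h e2 e3) a
    have keyr := LinearMap.congr_fun (rho_cast_right (Ac := Ac) e1 e3) a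
    simp only [LinearMap.comp_apply, LinearEquiv.coe_coe, AlgHom.toLinearMap_apply]
      at key keyr ⊢
    rw [keyr] at key
    rw [key]
    have merge : TensorProduct.map LinearMap.id
          ((Hc.Δ (μ⁻¹ * μ') ν').toLinearMap ∘ₗ famCast (k := k) e1) ((Ac.ρ μ ν) a)
        = TensorProduct.map LinearMap.id (Hc.Δ (μ⁻¹ * μ') ν').toLinearMap
            (TensorProduct.map LinearMap.id (famCast (k := k) e1) ((Ac.ρ μ ν) a)) := by
      rw [← LinearMap.comp_apply, ← TensorProduct.map_comp, LinearMap.id_comp]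
    rw [merge]

end DiaCompat

/-- For a commutative Hopf `G`-coalgebra `H` and a Poisson `A`-module `N`, the family
`N ⊗ H` with the componentwise coaction, module action `a · (n⊗h) = a_{(0)}·n ⊗ a_{(1)}h`
and Lie action `a ⋄ (n⊗h) = a_{(0)}⋄n ⊗ a_{(1)}h` is a Poisson `(A,H)`-Hopf module. -/
theorem tensor_poissonHopfModule (hcomm : ∀ (α : G) (x y : Hc.H α), x * y = y * x)
    (Nc : PoissonAModule Ac) :
    (∀ (μ ν : G) (x : Nc.N μ ⊗[k] Hc.H ν),
      compDia Ac Nc.N Nc.smul μ ν 1 x = x) ∧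
    (∀ (μ ν : G) (a b : Ac.A (μ * ν)) (x : Nc.N μ ⊗[k] Hc.H ν),
      compDia Ac Nc.N Nc.smul μ ν (a * b) x
        = compDia Ac Nc.N Nc.smul μ ν a (compDia Ac Nc.N Nc.smul μ ν b x)) ∧
    (∀ (μ ν : G) (a b : Ac.A (μ * ν)) (x : Nc.N μ ⊗[k] Hc.H ν),
      compDia Ac Nc.N Nc.dia μ ν (Ac.pb (μ * ν) a b) x
        = compDia Ac Nc.N Nc.dia μ ν a (compDia Ac Nc.N Nc.dia μ ν b x)
          - compDia Ac Nc.N Nc.dia μ ν b (compDia Ac Nc.N Nc.dia μ ν a x)) ∧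
    (∀ (μ ν : G) (a b : Ac.A (μ * ν)) (x : Nc.N μ ⊗[k] Hc.H ν),
      compDia Ac Nc.N Nc.dia μ ν a (compDia Ac Nc.N Nc.smul μ ν b x)
        = compDia Ac Nc.N Nc.smul μ ν (Ac.pb (μ * ν) a b) x
          + compDia Ac Nc.N Nc.smul μ ν b (compDia Ac Nc.N Nc.dia μ ν a x)) ∧
    (∀ (μ ν : G) (a b : Ac.A (μ * ν)) (x : Nc.N μ ⊗[k] Hc.H ν),
      compDia Ac Nc.N Nc.dia μ ν (a * b) x
        = compDia Ac Nc.N Nc.smul μ ν a (compDia Ac Nc.N Nc.dia μ ν b x)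
          + compDia Ac Nc.N Nc.smul μ ν b (compDia Ac Nc.N Nc.dia μ ν a x)) ∧
    TensorCoassoc (Hc := Hc) Nc.N ∧
    TensorCounit (Hc := Hc) Nc.N ∧
    TensorDiaCompat Ac Nc.N Nc.smul ∧
    TensorDiaCompat Ac Nc.N Nc.dia := by
  refine ⟨?_, ?_, ?_, ?_, ?_, tensorCoassoc_of, tensorCounit_of,
    tensorDiaCompat_of Nc.smul, tensorDiaCompat_of Nc.dia⟩
  · intro μ ν x
    rw [compDia_apply, map_one]
    exact psi_one Nc μ ν x
  · intro μ ν a b x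
    simp only [compDia_apply]
    rw [map_mul]
    exact psi_mul Nc μ ν _ _ x
  · intro μ ν a b x
    simp only [compDia_apply]
    rw [rho_pb]
    exact psi_pb Nc hcomm μ ν _ _ x
  · intro μ ν a b x
    simp only [compDia_apply]
    rw [rho_pb]
    exact psi_poisson1 Nc hcomm μ ν _ _ x
  · intro μ ν a b x
    simp only [compDia_apply]
    rw [map_mul]
    exact psi_poisson2 Nc hcomm μ ν _ _ x
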